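/- arXiv:2006.07225 — 3 statements merged into one kernel-verified Lean document; each statement's English description precedes it below -/
import Mathlib

section
/- Choosing f*(x,y,z) = 1 + log( p(x,y,z)/(p(x|z)p(y,z)) ) makes the NWJ lower bound tight: E_{p(x,y,z)}[f*] − e^{−1} E_{p(x|z)p(y,z)}[exp f*] = I(X;Y|Z). -/
open MeasureTheory Real

/-- Conditional mutual information `I(X;Y|Z)` expressed through the joint density
`p : A → B → C → ℝ` (here `A` is the range of `X`, `B` of `Y`, `C` of `Z`):
`I(X;Y|Z) = ∫ p log (p / (p(x|z) p(y,z))) = ∫ p log (p ⬝ p_Z / (p_{XZ} ⬝ p_{YZ}))`. -/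
noncomputable def condMI {A B C : Type*} [MeasurableSpace A] [MeasurableSpace B]
    [MeasurableSpace C] (μA : Measure A) (μB : Measure B) (μC : Measure C)
    (p : A → B → C → ℝ) : ℝ :=
  ∫ a, ∫ b, ∫ c, p a b c *
      Real.log (p a b c * (∫ a', ∫ b', p a' b' c ∂μB ∂μA) /
        ((∫ b', p a b' c ∂μB) * (∫ a', p a' b c ∂μA))) ∂μC ∂μB ∂μA

/-- The product density `p(x|z) p(y,z) = p_{XZ}(x,z) p_{YZ}(y,z) / p_Z(z)`. -/
noncomputable def prodDensity {A B C : Type*} [MeasurableSpace A] [MeasurableSpace B]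
    (μA : Measure A) (μB : Measure B) (p : A → B → C → ℝ) (a : A) (b : B) (c : C) : ℝ :=
  (∫ b', p a b' c ∂μB) * (∫ a', p a' b c ∂μA) / (∫ a', ∫ b', p a' b' c ∂μB ∂μA)

/-! The density ratio `r = p / q` with `q = p(x|z) p(y,z)` turns the NWJ integrand into
`p (1 + log r) = p + p log r` and `q e^{1 + log r} = e p`; the bounds on `p` and `q` make
both iterated integrals those of bounded measurable functions on a finite product space,
so they split, and `∫ p = 1` collapses the difference to `∫ p log r = I(X;Y|Z)`. -/

section IteratedIntegral

variable {A B C : Type*} [MeasurableSpace A] [MeasurableSpace B] [MeasurableSpace C]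
  {μA : Measure A} {μB : Measure B} {μC : Measure C} [SFinite μA] [SFinite μB] [SFinite μC]

theorem integral_integral_integral_eq_integral_prod {F : A → B → C → ℝ}
    (hF : Integrable (fun w => F w.1 w.2.1 w.2.2) (μA.prod (μB.prod μC))) :
    ∫ a, ∫ b, ∫ c, F a b c ∂μC ∂μB ∂μA = ∫ w, F w.1 w.2.1 w.2.2 ∂μA.prod (μB.prod μC) := by
  rw [integral_prod _ hF]
  exact integral_congr_ae (hF.prod_right_ae.mono fun a ha => (integral_prod _ ha).symm)

theorem integral_integral_integral_add {F G : A → B → C → ℝ}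
    (hF : Integrable (fun w => F w.1 w.2.1 w.2.2) (μA.prod (μB.prod μC)))
    (hG : Integrable (fun w => G w.1 w.2.1 w.2.2) (μA.prod (μB.prod μC))) :
    ∫ a, ∫ b, ∫ c, F a b c + G a b c ∂μC ∂μB ∂μA =
      (∫ a, ∫ b, ∫ c, F a b c ∂μC ∂μB ∂μA) + ∫ a, ∫ b, ∫ c, G a b c ∂μC ∂μB ∂μA := by
  rw [integral_integral_integral_eq_integral_prod hF,
    integral_integral_integral_eq_integral_prod hG,
    integral_integral_integral_eq_integral_prod (F := fun a b c => F a b c + G a b c) (hF.add hG),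
    integral_add hF hG]

end IteratedIntegral

theorem measurable_prodDensity {A B C : Type*} [MeasurableSpace A] [MeasurableSpace B]
    [MeasurableSpace C] {μA : Measure A} {μB : Measure B} [SFinite μA] [SFinite μB]
    {p : A → B → C → ℝ} (hp : Measurable fun w : A × B × C => p w.1 w.2.1 w.2.2) :
    Measurable fun w : A × B × C => prodDensity μA μB p w.1 w.2.1 w.2.2 := by
  have hXZ : Measurable fun w : A × C => ∫ b, p w.1 b w.2 ∂μB :=
    (hp.comp (by fun_prop : Measurable fun x : (A × C) × B => (x.1.1, x.2, x.1.2))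
      ).stronglyMeasurable.integral_prod_right'.measurable
  have hYZ : Measurable fun w : B × C => ∫ a, p a w.1 w.2 ∂μA :=
    (hp.comp (by fun_prop : Measurable fun x : (B × C) × A => (x.2, x.1.1, x.1.2))
      ).stronglyMeasurable.integral_prod_right'.measurable
  have hZ : Measurable fun c : C => ∫ a, ∫ b, p a b c ∂μB ∂μA :=
    (hXZ.comp (by fun_prop : Measurable fun x : C × A => (x.2, x.1))
      ).stronglyMeasurable.integral_prod_right'.measurable
  exact ((hXZ.comp (measurable_fst.prodMk measurable_snd.snd)).mul (hYZ.comp measurable_snd)).div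
    (hZ.comp measurable_snd.snd)

theorem condMI_eq_integral_mul_log_div_prodDensity {A B C : Type*} [MeasurableSpace A]
    [MeasurableSpace B] [MeasurableSpace C] (μA : Measure A) (μB : Measure B) (μC : Measure C)
    (p : A → B → C → ℝ) :
    condMI μA μB μC p = ∫ a, ∫ b, ∫ c,
      p a b c * log (p a b c / prodDensity μA μB p a b c) ∂μC ∂μB ∂μA := by
  simp only [condMI, prodDensity, div_div_eq_mul_div]

theorem abs_mul_log_div_le {x y l u : ℝ} (hl : 0 < l) (hx : x ∈ Set.Icc l u)
    (hy : y ∈ Set.Icc l u) : |x * log (x / y)| ≤ u * (log u - log l) := by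
  have hx0 := hl.trans_le hx.1
  have hy0 := hl.trans_le hy.1
  have hlog : |log (x / y)| ≤ log u - log l := by
    rw [log_div hx0.ne' hy0.ne', abs_sub_le_iff]
    constructor <;> linarith [log_le_log hl hx.1, log_le_log hl hy.1, log_le_log hx0 hx.2,
      log_le_log hy0 hy.2]
  rw [abs_mul, abs_of_pos hx0]
  exact mul_le_mul hx.2 hlog (abs_nonneg _) (hx0.le.trans hx.2)

theorem mul_exp_one_add_log_div {x y : ℝ} (hx : 0 < x) (hy : 0 < y) :
    y * exp (1 + log (x / y)) = exp 1 * x := by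
  rw [exp_add, exp_log (div_pos hx hy), mul_comm y, mul_assoc, div_mul_cancel₀ _ hy.ne']

/-- Choosing `f*(x,y,z) = 1 + log(p(x,y,z)/(p(x|z)p(y,z)))` makes the NWJ lower
bound tight: it equals `I(X;Y|Z)`.  The densities are assumed bounded away from `0`
and `∞` on finite-measure spaces. -/
theorem nwj_tight {A B C : Type*} [MeasurableSpace A] [MeasurableSpace B]
    [MeasurableSpace C] (μA : Measure A) (μB : Measure B) (μC : Measure C)
    [IsFiniteMeasure μA] [IsFiniteMeasure μB] [IsFiniteMeasure μC]
    (p : A → B → C → ℝ) (al bu : ℝ) (hal : 0 < al)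
    (hp : Measurable fun w : A × B × C => p w.1 w.2.1 w.2.2)
    (hbound : ∀ a b c, p a b c ∈ Set.Icc al bu)
    (hqbound : ∀ a b c, prodDensity μA μB p a b c ∈ Set.Icc al bu)
    (hp1 : ∫ a, ∫ b, ∫ c, p a b c ∂μC ∂μB ∂μA = 1) :
    (∫ a, ∫ b, ∫ c,
        p a b c * (1 + Real.log (p a b c / prodDensity μA μB p a b c)) ∂μC ∂μB ∂μA) -
        Real.exp (-1) * (∫ a, ∫ b, ∫ c, prodDensity μA μB p a b c *
          Real.exp (1 + Real.log (p a b c / prodDensity μA μB p a b c)) ∂μC ∂μB ∂μA)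
      = condMI μA μB μC p := by
  set q := prodDensity μA μB p
  have hp_int : Integrable (fun w => p w.1 w.2.1 w.2.2) (μA.prod (μB.prod μC)) :=
    .of_bound hp.aestronglyMeasurable bu <| .of_forall fun w =>
      (abs_of_pos (hal.trans_le (hbound _ _ _).1)).trans_le (hbound _ _ _).2
  have hlog_int : Integrable
      (fun w => p w.1 w.2.1 w.2.2 * log (p w.1 w.2.1 w.2.2 / q w.1 w.2.1 w.2.2))
      (μA.prod (μB.prod μC)) :=
    .of_bound (hp.mul (hp.div (measurable_prodDensity hp)).log).aestronglyMeasurable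
      (bu * (log bu - log al)) <| .of_forall fun w =>
      abs_mul_log_div_le hal (hbound _ _ _) (hqbound _ _ _)
  have hfirst : ∫ a, ∫ b, ∫ c, p a b c * (1 + log (p a b c / q a b c)) ∂μC ∂μB ∂μA =
      1 + condMI μA μB μC p := by
    simp_rw [mul_one_add]
    rw [integral_integral_integral_add hp_int hlog_int, hp1,
      condMI_eq_integral_mul_log_div_prodDensity]
  have hsecond : ∫ a, ∫ b, ∫ c, q a b c * exp (1 + log (p a b c / q a b c)) ∂μC ∂μB ∂μA =
      exp 1 := by
    have hpq : ∀ a b c, q a b c * exp (1 + log (p a b c / q a b c)) = exp 1 * p a b c :=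
      fun a b c => mul_exp_one_add_log_div (hal.trans_le (hbound a b c).1)
        (hal.trans_le (hqbound a b c).1)
    simp_rw [hpq, integral_const_mul, hp1, mul_one]
  rw [hfirst, hsecond, ← exp_add]
  norm_num
end

section
/- (McDiarmid concentration for the isolated k-NN inner average) Let g : X³ → ℝ satisfy g_min ≤ g ≤ g_max with c = g_max − g_min, and let φ(w₁,…,wₙ) = (1/m) Σ_{i=1}^{m} (1/k) Σ_{j ∈ A^m(z_i)} g(x_j, y_i, z_i), where wᵢ = (xᵢ,yᵢ,zᵢ), A^m(z_i) are the indices of the k nearest neighbors (in Euclidean distance on z) of z_i among {z_{m+1},…,z_n}, and m ≥ k. Then changing any single coordinate wᵢ changes the value of φ by at most c/k, i.e., φ has bounded differences with constant c/k in each coordinate. -/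
open Finset

/-- `isKNN d n m k z i A` says that `A` is the set of indices of the `k` nearest
neighbors of `z i` (in Euclidean distance) among the points `z j` with index
`j ∈ {m, …, n−1}` (the non-isolated points), with ties broken by the fixed rule
"smaller index wins". -/
def isKNN (d n m k : ℕ) (z : Fin n → EuclideanSpace ℝ (Fin d)) (i : Fin n)
    (A : Finset (Fin n)) : Prop :=
  (∀ j ∈ A, m ≤ (j : ℕ)) ∧ A.card = k ∧
    ∀ j ∈ A, ∀ j' : Fin n, m ≤ (j' : ℕ) → j' ∉ A →
      dist (z j) (z i) < dist (z j') (z i) ∨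
        (dist (z j) (z i) = dist (z j') (z i) ∧ (j : ℕ) < (j' : ℕ))

/-- The isolated `k`-NN sample average
`φ(w₁,…,wₙ) = (1/m) Σ_{i<m} (1/k) Σ_{j ∈ A i} g(x_j, y_i, z_i)`,
where `wᵢ = (xᵢ, yᵢ, zᵢ)` and `A i` is the `k`-NN index set of query `i`. -/
noncomputable def phiKNN (d n m k : ℕ)
    (g : EuclideanSpace ℝ (Fin d) → EuclideanSpace ℝ (Fin d) →
      EuclideanSpace ℝ (Fin d) → ℝ)
    (w : Fin n → EuclideanSpace ℝ (Fin d) × EuclideanSpace ℝ (Fin d) ×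
      EuclideanSpace ℝ (Fin d))
    (A : Fin n → Finset (Fin n)) : ℝ :=
  (1 / (m : ℝ)) * ∑ i ∈ Finset.univ.filter (fun i : Fin n => (i : ℕ) < m),
    (1 / (k : ℝ)) * ∑ j ∈ A i, g (w j).1 (w i).2.1 (w i).2.2

/-!
Write `φ` as the mean over the `m` queries of the inner averages `F i`. Changing `w i₀` either
moves a query point, and then only `F i₀` changes, by at most `c`, with `c / m ≤ c / k`; or it
moves a data point, and then for every query the old and new neighbour sets `A`, `A'` both
contain the `k - 1` points of `(A ∩ A') \ {i₀}`, on which the summands agree, so each `F i`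
moves by at most `c / k`.
-/

namespace Finset

variable {ι : Type*} [DecidableEq ι] {A A' C : Finset ι} {a : ι}

theorem card_sdiff_erase_inter_le_one (hcard : #A = #A')
    (h : A \ A' ⊆ {a} ∨ A' \ A ⊆ {a}) : #(A \ (A ∩ A').erase a) ≤ 1 := by
  have key : ∀ B B' : Finset ι, B \ B' ⊆ {a} → #(B \ (B ∩ B').erase a) ≤ 1 :=
    fun B B' hB => (card_le_card fun x hx => by grind).trans (card_singleton a).le
  rcases h with h | h
  · exact key A A' h
  · rw [card_sdiff_of_subset ((erase_subset _ _).trans inter_subset_left), hcard,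
      ← card_sdiff_of_subset ((erase_subset _ _).trans inter_subset_right), inter_comm]
    exact key A' A h

theorem abs_sum_sub_sum_le_card_sdiff_mul {f f' : ι → ℝ} {lo hi : ℝ}
    (hf : ∀ j, f j ∈ Set.Icc lo hi) (hf' : ∀ j, f' j ∈ Set.Icc lo hi)
    (hC : C ⊆ A) (hC' : C ⊆ A') (hcard : #A = #A') (heq : ∀ j ∈ C, f j = f' j) :
    |∑ j ∈ A, f j - ∑ j ∈ A', f' j| ≤ #(A \ C) * (hi - lo) := by
  have hcard' : #(A' \ C) = #(A \ C) := by
    rw [card_sdiff_of_subset hC, card_sdiff_of_subset hC', hcard]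
  have hsum :
      ∑ j ∈ A, f j - ∑ j ∈ A', f' j = ∑ j ∈ A \ C, f j - ∑ j ∈ A' \ C, f' j := by
    rw [← sum_sdiff hC, ← sum_sdiff hC', sum_congr rfl heq]
    ring
  have bounds : ∀ (B : Finset ι) (u : ι → ℝ), (∀ j, u j ∈ Set.Icc lo hi) →
      #B * lo ≤ ∑ j ∈ B, u j ∧ ∑ j ∈ B, u j ≤ #B * hi := fun B u hu =>
    ⟨by simpa using B.card_nsmul_le_sum u lo fun j _ => (hu j).1,
      by simpa using B.sum_le_card_nsmul u hi fun j _ => (hu j).2⟩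
  have h1 := bounds (A \ C) f hf
  have h2 := bounds (A' \ C) f' hf'
  rw [hcard'] at h2
  rw [hsum, abs_sub_le_iff]
  constructor <;> linarith

end Finset

namespace isKNN

variable {d n m k : ℕ} {z z' : Fin n → EuclideanSpace ℝ (Fin d)} {i i₀ j j' : Fin n}
  {A A' : Finset (Fin n)}

/- Ties being broken by index, `A` consists of the `k` smallest data points for the strict
order `(dist · (z i), index)`; a swap `j ∈ A \ A'`, `j' ∈ A' \ A` would put `j` before `j'` and
`j'` before `j` unless one of them moved. -/
theorem ne_or_ne_of_mem_sdiff (hA : isKNN d n m k z i A) (hA' : isKNN d n m k z' i A')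
    (hi : z i = z' i) (hj : j ∈ A \ A') (hj' : j' ∈ A' \ A) :
    z j ≠ z' j ∨ z j' ≠ z' j' := by
  rw [mem_sdiff] at hj hj'
  by_contra! h
  have e := hA.2.2 j hj.1 j' (hA'.1 j' hj'.1) hj'.2
  have e' := hA'.2.2 j' hj'.1 j (hA.1 j hj.1) hj.2
  rw [h.1, h.2, hi] at e
  rcases e with e | ⟨e, _⟩ <;> rcases e' with e' | ⟨e', _⟩ <;> linarith

theorem eq_of_eq_on_data (hA : isKNN d n m k z i A) (hA' : isKNN d n m k z' i A')
    (hi : z i = z' i) (hz : ∀ j : Fin n, m ≤ (j : ℕ) → z j = z' j) : A = A' := by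
  by_contra hne
  have hcard : #A = #A' := hA.2.1.trans hA'.2.1.symm
  obtain ⟨j, hj⟩ : (A \ A').Nonempty := sdiff_nonempty.2 fun hsub =>
    hne (eq_of_subset_of_card_le hsub hcard.ge)
  obtain ⟨j', hj'⟩ : (A' \ A).Nonempty := by
    rw [← card_pos, ← card_sdiff_comm hcard]; exact card_pos.2 ⟨j, hj⟩
  rcases hA.ne_or_ne_of_mem_sdiff hA' hi hj hj' with h | h
  · exact h (hz j (hA.1 j (mem_sdiff.1 hj).1))
  · exact h (hz j' (hA'.1 j' (mem_sdiff.1 hj').1))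

theorem sdiff_subset_singleton_or (hA : isKNN d n m k z i A) (hA' : isKNN d n m k z' i A')
    (hi : z i = z' i) (hz : ∀ j : Fin n, j ≠ i₀ → z j = z' j) :
    A \ A' ⊆ {i₀} ∨ A' \ A ⊆ {i₀} := by
  by_contra! h
  obtain ⟨j, hj, hji₀⟩ := not_subset.1 h.1
  obtain ⟨j', hj', hj'i₀⟩ := not_subset.1 h.2
  rw [mem_singleton] at hji₀ hj'i₀
  rcases hA.ne_or_ne_of_mem_sdiff hA' hi hj hj' with h | h
  · exact h (hz j hji₀)
  · exact h (hz j' hj'i₀)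

end isKNN

section QueryAverage

variable {α β γ : Type*} {n k : ℕ} {g : α → β → γ → ℝ} {lo hi : ℝ}
  {w : Fin n → α × β × γ} {A : Fin n → Finset (Fin n)} {i : Fin n}

noncomputable def knnQueryAvg (k : ℕ) (g : α → β → γ → ℝ)
    (w : Fin n → α × β × γ) (A : Fin n → Finset (Fin n)) (i : Fin n) : ℝ :=
  (1 / (k : ℝ)) * ∑ j ∈ A i, g (w j).1 (w i).2.1 (w i).2.2

theorem knnQueryAvg_mem_Icc (hk : 0 < k) (hg : ∀ x y z, g x y z ∈ Set.Icc lo hi)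
    (hcard : #(A i) = k) : knnQueryAvg k g w A i ∈ Set.Icc lo hi := by
  have hk' : (0 : ℝ) < k := by exact_mod_cast hk
  have hlo := (A i).card_nsmul_le_sum _ lo fun j _ => (hg (w j).1 (w i).2.1 (w i).2.2).1
  have hhi := (A i).sum_le_card_nsmul _ hi fun j _ => (hg (w j).1 (w i).2.1 (w i).2.2).2
  rw [hcard, nsmul_eq_mul] at hlo hhi
  rw [knnQueryAvg, one_div_mul_eq_div, Set.mem_Icc, le_div_iff₀ hk', div_le_iff₀ hk']
  constructor <;> linarith

end QueryAverage

section KNN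

variable {d n m k : ℕ} {g : EuclideanSpace ℝ (Fin d) → EuclideanSpace ℝ (Fin d) →
    EuclideanSpace ℝ (Fin d) → ℝ} {lo hi : ℝ}
  {w w' : Fin n → EuclideanSpace ℝ (Fin d) × EuclideanSpace ℝ (Fin d) ×
    EuclideanSpace ℝ (Fin d)}
  {A A' : Fin n → Finset (Fin n)} {i i₀ : Fin n}

theorem knnQueryAvg_eq_of_lt (hi₀ : (i₀ : ℕ) < m) (hii₀ : i ≠ i₀)
    (hdiff : ∀ j, j ≠ i₀ → w j = w' j)
    (hA : isKNN d n m k (fun j => (w j).2.2) i (A i))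
    (hA' : isKNN d n m k (fun j => (w' j).2.2) i (A' i)) :
    knnQueryAvg k g w A i = knnQueryAvg k g w' A' i := by
  have hdata : ∀ j : Fin n, m ≤ (j : ℕ) → w j = w' j := fun j hj =>
    hdiff j fun h => by subst h; omega
  have hAA' : A i = A' i := hA.eq_of_eq_on_data hA' (by rw [hdiff i hii₀])
    fun j hj => by rw [hdata j hj]
  rw [knnQueryAvg, knnQueryAvg, ← hAA', hdiff i hii₀]
  congr 1
  exact sum_congr rfl fun j hj => by rw [hdata j (hA.1 j hj)]

theorem abs_knnQueryAvg_sub_le (hg : ∀ x y z, g x y z ∈ Set.Icc lo hi) (hii₀ : i ≠ i₀)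
    (hdiff : ∀ j, j ≠ i₀ → w j = w' j)
    (hA : isKNN d n m k (fun j => (w j).2.2) i (A i))
    (hA' : isKNN d n m k (fun j => (w' j).2.2) i (A' i)) :
    |knnQueryAvg k g w A i - knnQueryAvg k g w' A' i| ≤ (hi - lo) / k := by
  have hlohi : lo ≤ hi := (hg (w i).1 (w i).2.1 (w i).2.2).1.trans (hg _ _ _).2
  have hcard : #(A i) = #(A' i) := hA.2.1.trans hA'.2.1.symm
  have hzi : (w i).2.2 = (w' i).2.2 := by rw [hdiff i hii₀]
  have hsmall := card_sdiff_erase_inter_le_one hcard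
    (hA.sdiff_subset_singleton_or hA' hzi fun j hj => by rw [hdiff j hj])
  have hsum := abs_sum_sub_sum_le_card_sdiff_mul (fun j => hg (w j).1 (w i).2.1 (w i).2.2)
    (fun j => hg (w' j).1 (w' i).2.1 (w' i).2.2)
    ((erase_subset _ _).trans inter_subset_left) ((erase_subset _ _).trans inter_subset_right)
    hcard fun j hj => by rw [hdiff j (ne_of_mem_erase hj), hdiff i hii₀]
  rw [knnQueryAvg, knnQueryAvg, ← mul_sub, abs_mul, abs_of_nonneg (by positivity),
    one_div_mul_eq_div]
  gcongr
  calc _ ≤ _ := hsum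
    _ ≤ 1 * (hi - lo) := by gcongr; exact_mod_cast hsmall
    _ = hi - lo := one_mul _

theorem sum_abs_knnQueryAvg_sub_le (hk : 0 < k) (hkm : k ≤ m)
    (hg : ∀ x y z, g x y z ∈ Set.Icc lo hi) (hdiff : ∀ j, j ≠ i₀ → w j = w' j)
    (hA : ∀ i : Fin n, (i : ℕ) < m → isKNN d n m k (fun j => (w j).2.2) i (A i))
    (hA' : ∀ i : Fin n, (i : ℕ) < m → isKNN d n m k (fun j => (w' j).2.2) i (A' i)) :
    ∑ i ∈ univ.filter (fun i : Fin n => (i : ℕ) < m),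
      |knnQueryAvg k g w A i - knnQueryAvg k g w' A' i| ≤ m * ((hi - lo) / k) := by
  have hlohi : lo ≤ hi := (hg (w i₀).1 (w i₀).2.1 (w i₀).2.2).1.trans (hg _ _ _).2
  rcases lt_or_ge (i₀ : ℕ) m with hi₀ | hi₀
  · rw [sum_eq_single_of_mem i₀ (by simpa using hi₀) fun i hiQ hii₀ => by
      rw [knnQueryAvg_eq_of_lt hi₀ hii₀ hdiff (hA i (by simpa using hiQ))
        (hA' i (by simpa using hiQ)), sub_self, abs_zero]]
    calc _ ≤ hi - lo := by
          rw [← Real.dist_eq]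
          exact Real.dist_le_of_mem_Icc (knnQueryAvg_mem_Icc hk hg (hA i₀ hi₀).2.1)
            (knnQueryAvg_mem_Icc hk hg (hA' i₀ hi₀).2.1)
      _ ≤ m * ((hi - lo) / k) := by
          rw [mul_div_assoc', le_div_iff₀ (by exact_mod_cast hk), mul_comm]
          gcongr
  · calc _ ≤ #(univ.filter fun i : Fin n => (i : ℕ) < m) • ((hi - lo) / k) := by
          refine sum_le_card_nsmul _ _ _ fun i hiQ => ?_
          have hi' : (i : ℕ) < m := by simpa using hiQ
          exact abs_knnQueryAvg_sub_le hg (fun h => by subst h; omega) hdiff (hA i hi') (hA' i hi')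
      _ ≤ m * ((hi - lo) / k) := by
          rw [nsmul_eq_mul]
          gcongr
          exact_mod_cast Fin.card_filter_val_lt.trans_le (min_le_right _ _)

end KNN

theorem knn_bounded_differences_general (d n m k : ℕ) (hk : 0 < k) (hkm : k ≤ m)
    (g : EuclideanSpace ℝ (Fin d) → EuclideanSpace ℝ (Fin d) →
      EuclideanSpace ℝ (Fin d) → ℝ)
    (gmin gmax : ℝ) (hg : ∀ x y z, g x y z ∈ Set.Icc gmin gmax)
    (w w' : Fin n → EuclideanSpace ℝ (Fin d) × EuclideanSpace ℝ (Fin d) ×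
      EuclideanSpace ℝ (Fin d))
    (i₀ : Fin n) (hdiff : ∀ j : Fin n, j ≠ i₀ → w j = w' j)
    (A A' : Fin n → Finset (Fin n))
    (hA : ∀ i : Fin n, (i : ℕ) < m → isKNN d n m k (fun j => (w j).2.2) i (A i))
    (hA' : ∀ i : Fin n, (i : ℕ) < m → isKNN d n m k (fun j => (w' j).2.2) i (A' i)) :
    |phiKNN d n m k g w A - phiKNN d n m k g w' A'| ≤ (gmax - gmin) / k := by
  have hm : (0 : ℝ) < m := by exact_mod_cast hk.trans_le hkm
  calc |phiKNN d n m k g w A - phiKNN d n m k g w' A'|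
      = 1 / m * |∑ i ∈ univ.filter (fun i : Fin n => (i : ℕ) < m),
          (knnQueryAvg k g w A i - knnQueryAvg k g w' A' i)| := by
        rw [phiKNN, phiKNN, ← mul_sub, ← sum_sub_distrib, abs_mul, abs_of_pos (by positivity)]
        rfl
    _ ≤ 1 / m * (m * ((gmax - gmin) / k)) := by
        gcongr
        exact (abs_sum_le_sum_abs _ _).trans
          (sum_abs_knnQueryAvg_sub_le hk hkm hg hdiff hA hA')
    _ = (gmax - gmin) / k := by field_simp

/-- Bounded-differences property of the isolated `k`-NN sample average:
if `g_min ≤ g ≤ g_max` with `c = g_max − g_min` and `k ≤ m`, then changing a single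
coordinate `w i₀` of the dataset changes `φ` by at most `c / k`. -/
theorem knn_bounded_differences (d n m k : ℕ) (hk : 0 < k) (hkm : k ≤ m) (hmn : m ≤ n)
    (g : EuclideanSpace ℝ (Fin d) → EuclideanSpace ℝ (Fin d) →
      EuclideanSpace ℝ (Fin d) → ℝ)
    (gmin gmax : ℝ) (hg : ∀ x y z, g x y z ∈ Set.Icc gmin gmax)
    (w w' : Fin n → EuclideanSpace ℝ (Fin d) × EuclideanSpace ℝ (Fin d) ×
      EuclideanSpace ℝ (Fin d))
    (i₀ : Fin n) (hdiff : ∀ j : Fin n, j ≠ i₀ → w j = w' j)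
    (A A' : Fin n → Finset (Fin n))
    (hA : ∀ i : Fin n, (i : ℕ) < m → isKNN d n m k (fun j => (w j).2.2) i (A i))
    (hA' : ∀ i : Fin n, (i : ℕ) < m → isKNN d n m k (fun j => (w' j).2.2) i (A' i)) :
    |phiKNN d n m k g w A - phiKNN d n m k g w' A'| ≤ (gmax - gmin) / k :=
  knn_bounded_differences_general d n m k hk hkm g gmin gmax hg w w' i₀ hdiff A A' hA hA'
end

section
/- (McDiarmid's inequality) Let V₁,…,Vₙ be independent random variables with values in a set V, and let φ : Vⁿ → ℝ satisfy the bounded-difference condition: for each i, sup |φ(v₁,…,vₙ) − φ(v₁,…,v'ᵢ,…,vₙ)| ≤ cᵢ. Then for any ε > 0, P( |φ(Vⁿ) − E[φ(Vⁿ)]| ≥ ε ) ≤ 2 exp( −2ε² / Σᵢ cᵢ² ). -/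
/-!
Integrate out one coordinate at a time. With `g w = ∫ φ (x, w) dν₀(x)`, split
`φ - 𝔼φ = (φ - g) + (g - 𝔼g)`. For fixed `w`, `x ↦ φ (x, w)` ranges in an interval of length
`c₀`, so by Hoeffding's lemma the first summand has a sub-Gaussian mgf with variance proxy
`c₀² / 4` under `ν₀`; the average `g` has bounded differences with the remaining constants, so
by induction the second summand has proxy `∑_{i ≠ 0} cᵢ² / 4`, and by Fubini the proxies add.
Independence makes the joint law of the `Vᵢ` the product of their laws, and the Chernoff bound on
both tails with proxy `∑ cᵢ² / 4` gives the result.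
-/

open MeasureTheory ProbabilityTheory Real
open scoped NNReal

section Oscillation

variable {α : Type*} {f : α → ℝ} {c : ℝ}

lemma exists_forall_mem_Icc_of_abs_sub_le (h : ∀ x y, |f x - f y| ≤ c) :
    ∃ a, ∀ x, f x ∈ Set.Icc a (a + c) := by
  rcases isEmpty_or_nonempty α with _ | ⟨⟨x₀⟩⟩
  · exact ⟨0, isEmptyElim⟩
  have : Nonempty α := ⟨x₀⟩
  have hbdd : BddBelow (Set.range f) :=
    ⟨f x₀ - c, by rintro _ ⟨x, rfl⟩; linarith [abs_le.1 (h x₀ x)]⟩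
  refine ⟨⨅ x, f x, fun x => ⟨ciInf_le hbdd x, ?_⟩⟩
  have : f x - c ≤ ⨅ y, f y := le_ciInf fun y => by linarith [abs_le.1 (h x y)]
  linarith

variable [MeasurableSpace α] {μ : Measure α}

lemma integrable_of_abs_sub_le [IsFiniteMeasure μ] (hf : AEMeasurable f μ)
    (h : ∀ x y, |f x - f y| ≤ c) : Integrable f μ :=
  let ⟨a, ha⟩ := exists_forall_mem_Icc_of_abs_sub_le h
  .of_mem_Icc a (a + c) hf (ae_of_all _ ha)

lemma hasSubgaussianMGF_sub_integral_of_abs_sub_le [IsProbabilityMeasure μ]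
    (hf : AEMeasurable f μ) (h : ∀ x y, |f x - f y| ≤ c) :
    HasSubgaussianMGF (fun x => f x - μ[f]) ((‖c‖₊ / 2) ^ 2) μ := by
  obtain ⟨a, ha⟩ := exists_forall_mem_Icc_of_abs_sub_le h
  simpa using hasSubgaussianMGF_of_mem_Icc hf (ae_of_all _ ha)

end Oscillation

namespace ProbabilityTheory.HasSubgaussianMGF

section Tail

variable {Ω : Type*} [MeasurableSpace Ω] {μ : Measure Ω} {X : Ω → ℝ} {c : ℝ≥0}

lemma measureReal_abs_ge_le (h : HasSubgaussianMGF X c μ) {ε : ℝ} (hε : 0 ≤ ε) :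
    μ.real {ω | ε ≤ |X ω|} ≤ 2 * exp (-ε ^ 2 / (2 * c)) := by
  have h_union : {ω | ε ≤ |X ω|} = {ω | ε ≤ X ω} ∪ {ω | ε ≤ (-X) ω} :=
    Set.ext fun _ => by simp only [Set.mem_ofPred_eq, Set.mem_union, Pi.neg_apply, le_abs]
  calc μ.real {ω | ε ≤ |X ω|}
      ≤ μ.real {ω | ε ≤ X ω} + μ.real {ω | ε ≤ (-X) ω} := h_union ▸ measureReal_union_le _ _
    _ ≤ exp (-ε ^ 2 / (2 * c)) + exp (-ε ^ 2 / (2 * c)) :=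
        add_le_add (h.measure_ge_le hε) (h.neg.measure_ge_le hε)
    _ = 2 * exp (-ε ^ 2 / (2 * c)) := by ring

end Tail

section Prod

variable {α β : Type*} [MeasurableSpace α] [MeasurableSpace β] {μ : Measure α} {ν : Measure β}
  [SFinite μ] [SFinite ν]

lemma prod_add {Y : α × β → ℝ} {X : β → ℝ} {cY cX : ℝ≥0} (hY_meas : Measurable Y)
    (hY : ∀ b, HasSubgaussianMGF (fun a => Y (a, b)) cY μ) (hX : HasSubgaussianMGF X cX ν) :
    HasSubgaussianMGF (fun p => Y p + X p.2) (cY + cX) (μ.prod ν) := by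
  have h_exp (t : ℝ) (p : α × β) :
      exp (t * (Y p + X p.2)) = exp (t * Y p) * exp (t * X p.2) := by
    rw [mul_add, exp_add]
  have h_fiber (t : ℝ) (b : β) :
      ∫ a, exp (t * (Y (a, b) + X b)) ∂μ ≤ exp (cY * t ^ 2 / 2) * exp (t * X b) := by
    simp_rw [h_exp, integral_mul_const]
    exact mul_le_mul_of_nonneg_right ((hY b).mgf_le t) (exp_nonneg _)
  have h_int (t : ℝ) : Integrable (fun p => exp (t * (Y p + X p.2))) (μ.prod ν) := by
    have h_meas : AEStronglyMeasurable (fun p => exp (t * (Y p + X p.2))) (μ.prod ν) := by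
      simp_rw [h_exp]
      exact (hY_meas.const_mul t).exp.aestronglyMeasurable.mul
        (hX.integrable_exp_mul t).aestronglyMeasurable.comp_snd
    refine (integrable_prod_iff' h_meas).2 ⟨ae_of_all _ fun b => ?_, ?_⟩
    · simp_rw [h_exp]
      exact ((hY b).integrable_exp_mul t).mul_const _
    · refine ((hX.integrable_exp_mul t).const_mul (exp (cY * t ^ 2 / 2))).mono'
        h_meas.norm.prod_swap.integral_prod_right' (ae_of_all _ fun b => ?_)
      simp only [Real.norm_eq_abs, abs_exp]
      rw [abs_of_nonneg (integral_nonneg fun _ => (exp_pos _).le)]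
      exact h_fiber t b
  refine ⟨h_int, fun t => ?_⟩
  calc mgf (fun p => Y p + X p.2) (μ.prod ν) t
      = ∫ b, ∫ a, exp (t * (Y (a, b) + X b)) ∂μ ∂ν := integral_prod_symm _ (h_int t)
    _ ≤ ∫ b, exp (cY * t ^ 2 / 2) * exp (t * X b) ∂ν :=
        integral_mono_of_nonneg (ae_of_all _ fun _ => integral_nonneg fun _ => (exp_pos _).le)
          ((hX.integrable_exp_mul t).const_mul _) (ae_of_all _ (h_fiber t))
    _ = exp (cY * t ^ 2 / 2) * mgf X ν t := integral_const_mul _ _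
    _ ≤ exp (cY * t ^ 2 / 2) * exp (cX * t ^ 2 / 2) := by gcongr; exact hX.mgf_le t
    _ = exp ((cY + cX : ℝ≥0) * t ^ 2 / 2) := by rw [← exp_add]; push_cast; ring_nf

end Prod

end ProbabilityTheory.HasSubgaussianMGF

lemma measurable_fin_cons {𝒱 : Type*} [MeasurableSpace 𝒱] {n : ℕ} :
    Measurable (fun p : 𝒱 × (Fin n → 𝒱) => (Fin.cons p.1 p.2 : Fin (n + 1) → 𝒱)) := by
  refine measurable_pi_iff.2 fun i => ?_
  induction i using Fin.cases with
  | zero => simp only [Fin.cons_zero]; fun_prop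
  | succ j => simp only [Fin.cons_succ]; fun_prop

def HasBoundedDifferences {ι 𝒱 : Type*} (φ : (ι → 𝒱) → ℝ) (c : ι → ℝ) : Prop :=
  ∀ (i : ι) (v v' : ι → 𝒱), (∀ j, j ≠ i → v j = v' j) → |φ v - φ v'| ≤ c i

namespace HasBoundedDifferences

variable {ι 𝒱 : Type*}

lemma abs_sub_le_sum [Fintype ι] {φ : (ι → 𝒱) → ℝ} {c : ι → ℝ} (hφ : HasBoundedDifferences φ c)
    (v v' : ι → 𝒱) : |φ v - φ v'| ≤ ∑ i, c i := by
  classical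
  have key (s : Finset ι) : |φ (s.piecewise v' v) - φ v| ≤ ∑ i ∈ s, c i := by
    induction s using Finset.induction_on with
    | empty => simp
    | insert i s hi ih =>
      calc |φ ((insert i s).piecewise v' v) - φ v|
          ≤ |φ ((insert i s).piecewise v' v) - φ (s.piecewise v' v)|
            + |φ (s.piecewise v' v) - φ v| := abs_sub_le _ _ _
        _ ≤ c i + ∑ j ∈ s, c j :=
            add_le_add (hφ i _ _ fun j hj => Finset.piecewise_insert_of_ne _ _ _ hj) ih
        _ = ∑ j ∈ insert i s, c j := (Finset.sum_insert hi).symm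
  simpa [abs_sub_comm] using key Finset.univ

variable {n : ℕ} {φ : (Fin (n + 1) → 𝒱) → ℝ} {c : Fin (n + 1) → ℝ}

lemma abs_cons_sub_cons_le (hφ : HasBoundedDifferences φ c) (x x' : 𝒱) (w : Fin n → 𝒱) :
    |φ (Fin.cons x w) - φ (Fin.cons x' w)| ≤ c 0 :=
  hφ 0 _ _ fun j hj => by
    obtain ⟨k, rfl⟩ := Fin.exists_succ_eq.2 hj
    simp

lemma integral_cons [MeasurableSpace 𝒱] {μ : Measure 𝒱} [IsProbabilityMeasure μ]
    (hφ : HasBoundedDifferences φ c) (hφ_meas : Measurable φ) :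
    HasBoundedDifferences (fun w => ∫ x, φ (Fin.cons x w) ∂μ) (fun j => c j.succ) := by
  have h_int (w : Fin n → 𝒱) : Integrable (fun x => φ (Fin.cons x w)) μ :=
    integrable_of_abs_sub_le
      (hφ_meas.comp (measurable_fin_cons.comp measurable_prodMk_right)).aemeasurable
      (hφ.abs_cons_sub_cons_le · · w)
  intro j w w' hw
  rw [← integral_sub (h_int w) (h_int w')]
  have h_diff (x : 𝒱) : |φ (Fin.cons x w) - φ (Fin.cons x w')| ≤ c j.succ :=
    hφ j.succ _ _ fun k hk => by
      induction k using Fin.cases with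
      | zero => rfl
      | succ l => simpa using hw l (ne_of_apply_ne Fin.succ hk)
  simpa using norm_integral_le_of_norm_le_const (μ := μ)
    (ae_of_all _ fun x => (Real.norm_eq_abs _).trans_le (h_diff x))

end HasBoundedDifferences

theorem hasSubgaussianMGF_pi_sub_integral {𝒱 : Type*} [MeasurableSpace 𝒱] {n : ℕ}
    {ν : Fin n → Measure 𝒱} [∀ i, IsProbabilityMeasure (ν i)] {φ : (Fin n → 𝒱) → ℝ}
    {c : Fin n → ℝ} (hφ : HasBoundedDifferences φ c) (hφ_meas : Measurable φ) :
    HasSubgaussianMGF (fun v => φ v - ∫ v', φ v' ∂Measure.pi ν) (∑ i, (‖c i‖₊ / 2) ^ 2)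
      (Measure.pi ν) := by
  induction n with
  | zero =>
    have h_const (v : Fin 0 → 𝒱) : φ v = φ isEmptyElim := congrArg φ (Subsingleton.elim _ _)
    simp [h_const]
  | succ n ih =>
    set e := MeasurableEquiv.piFinSuccAbove (fun _ : Fin (n + 1) => 𝒱) 0
    have hMP : MeasurePreserving e (Measure.pi ν)
        ((ν 0).prod (Measure.pi fun j => ν j.succ)) := by
      simpa only [Fin.succAbove_zero] using measurePreserving_piFinSuccAbove ν 0
    set ψ : 𝒱 × (Fin n → 𝒱) → ℝ := fun p => φ (Fin.cons p.1 p.2)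
    have hψ_e (v : Fin (n + 1) → 𝒱) : ψ (e v) = φ v := by simp [ψ, e]
    have hψ_meas : Measurable ψ := hφ_meas.comp measurable_fin_cons
    set g : (Fin n → 𝒱) → ℝ := fun w => ∫ x, ψ (x, w) ∂ν 0
    have hg_meas : Measurable g := hψ_meas.stronglyMeasurable.integral_prod_left'.measurable
    have h_mean : ∫ v, φ v ∂Measure.pi ν = ∫ w, g w ∂Measure.pi fun j => ν j.succ := by
      simp_rw [← hψ_e]
      rw [hMP.integral_comp' ψ]
      exact integral_prod_symm ψ
        (integrable_of_abs_sub_le hψ_meas.aemeasurable fun _ _ => hφ.abs_sub_le_sum _ _)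
    have h_fiber (w : Fin n → 𝒱) :
        HasSubgaussianMGF (fun x => ψ (x, w) - g w) ((‖c 0‖₊ / 2) ^ 2) (ν 0) :=
      hasSubgaussianMGF_sub_integral_of_abs_sub_le
        (hψ_meas.comp measurable_prodMk_right).aemeasurable (hφ.abs_cons_sub_cons_le · · w)
    have h_prod := HasSubgaussianMGF.prod_add (Y := fun p => ψ p - g p.2)
      (hψ_meas.sub (hg_meas.comp measurable_snd))
      h_fiber (ih (ν := fun j => ν j.succ) (φ := g) (hφ.integral_cons hφ_meas) hg_meas)
    rw [hMP.map_eq.symm] at h_prod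
    rw [Fin.sum_univ_succ, h_mean]
    convert h_prod.of_map e.measurable.aemeasurable using 1
    ext v
    simp only [Function.comp_apply, hψ_e]
    ring

theorem mcdiarmid_inequality_general {Ω 𝒱 : Type*} [MeasurableSpace Ω] [MeasurableSpace 𝒱]
    {n : ℕ} (μ : Measure Ω) [IsProbabilityMeasure μ]
    (V : Fin n → Ω → 𝒱) (hV : ∀ i, Measurable (V i))
    (hind : iIndepFun V μ)
    (φ : (Fin n → 𝒱) → ℝ) (hφ : Measurable φ)
    (c : Fin n → ℝ)
    (hc : ∀ (i : Fin n) (v v' : Fin n → 𝒱),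
      (∀ j, j ≠ i → v j = v' j) → |φ v - φ v'| ≤ c i)
    (ε : ℝ) (hε : 0 < ε) :
    μ {ω | ε ≤ |φ (fun i => V i ω) - ∫ ω', φ (fun i => V i ω') ∂μ|}
      ≤ ENNReal.ofReal (2 * Real.exp (-2 * ε ^ 2 / ∑ i, (c i) ^ 2)) := by
  have hW : Measurable fun ω i => V i ω := measurable_pi_lambda _ hV
  have (i : Fin n) : IsProbabilityMeasure (μ.map (V i)) :=
    Measure.isProbabilityMeasure_map (hV i).aemeasurable
  have h_subG := hasSubgaussianMGF_pi_sub_integral (ν := fun i => μ.map (V i)) hc hφ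
  rw [← hind.map_fun_eq_pi_map fun i => (hV i).aemeasurable,
    integral_map hW.aemeasurable hφ.aestronglyMeasurable] at h_subG
  have h_param : ((∑ i, (‖c i‖₊ / 2) ^ 2 : ℝ≥0) : ℝ) = (∑ i, c i ^ 2) / 4 := by
    push_cast
    rw [Finset.sum_div]
    refine Finset.sum_congr rfl fun i _ => ?_
    rw [Real.norm_eq_abs, div_pow, sq_abs]
    norm_num
  rw [← ofReal_measureReal]
  refine ENNReal.ofReal_le_ofReal
    (((h_subG.of_map hW.aemeasurable).measureReal_abs_ge_le hε.le).trans_eq ?_)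
  rw [h_param]
  congr 2
  ring

/-- McDiarmid's inequality: if `V₁,…,Vₙ` are independent random variables and
`φ` satisfies the bounded-difference condition with constants `cᵢ`, then
`P(|φ(V) − E[φ(V)]| ≥ ε) ≤ 2 exp(−2ε² / Σᵢ cᵢ²)`. -/
theorem mcdiarmid_inequality {Ω 𝒱 : Type*} [MeasurableSpace Ω] [MeasurableSpace 𝒱]
    {n : ℕ} (μ : Measure Ω) [IsProbabilityMeasure μ]
    (V : Fin n → Ω → 𝒱) (hV : ∀ i, Measurable (V i))
    (hind : iIndepFun V μ)
    (φ : (Fin n → 𝒱) → ℝ) (hφ : Measurable φ)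
    (c : Fin n → ℝ)
    (hc : ∀ (i : Fin n) (v v' : Fin n → 𝒱),
      (∀ j, j ≠ i → v j = v' j) → |φ v - φ v'| ≤ c i)
    (hint : Integrable (fun ω => φ (fun i => V i ω)) μ)
    (ε : ℝ) (hε : 0 < ε) :
    μ {ω | ε ≤ |φ (fun i => V i ω) - ∫ ω', φ (fun i => V i ω') ∂μ|}
      ≤ ENNReal.ofReal (2 * Real.exp (-2 * ε ^ 2 / ∑ i, (c i) ^ 2)) :=
  mcdiarmid_inequality_general μ V hV hind φ hφ c hc ε hε
end
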